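/- arXiv:2407.18131 — 5 statements merged into one kernel-verified Lean document; each statement's English description precedes it below -/
import Mathlib

section
/- Let x_i, x_j, x_k, N be integers with x_j ≥ 1, x_k ≥ 0 and N ≥ 1, and let y_j, y_k, y_N be real numbers. Assume: (a) |N·y_k − x_k·y_N| ≤ 1; (b) |N − y_N| ≤ 1; (c) |x_j − y_j| ≤ 1; (d) N ≥ 4·(x_k + 1)·(y_j + 1) + 1; and (e) |x_i − x_j·y_k| ≤ 1/2. Then x_i = x_j·x_k. -/
/-- Arithmetical core of the converse direction of the undecidability reduction
for the Gap Satisfiability Problem of unbounded MIB systems. -/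
theorem stmt1 (xi xj xk N : ℤ) (yj yk yN : ℝ)
    (hxj : 1 ≤ xj) (hxk : 0 ≤ xk) (hN : 1 ≤ N)
    (ha : |(N : ℝ) * yk - (xk : ℝ) * yN| ≤ 1)
    (hb : |(N : ℝ) - yN| ≤ 1)
    (hc : |(xj : ℝ) - yj| ≤ 1)
    (hd : (N : ℝ) ≥ 4 * ((xk : ℝ) + 1) * (yj + 1) + 1)
    (he : |(xi : ℝ) - (xj : ℝ) * yk| ≤ 1 / 2) :
    xi = xj * xk := by
  have hNpos : (0:ℝ) < N := by exact_mod_cast hN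
  have hxjR : (1:ℝ) ≤ xj := by exact_mod_cast hxj
  have hxkR : (0:ℝ) ≤ xk := by exact_mod_cast hxk
  rw [abs_le] at ha hb hc he
  have hA1 : (N:ℝ) * (yk - xk) ≤ xk + 1 := by nlinarith [ha.2, hb.1, hxkR]
  have hA2 : -((xk:ℝ) + 1) ≤ (N:ℝ) * (yk - xk) := by nlinarith [ha.1, hb.2, hxkR]
  have hB : 4 * (xj:ℝ) * ((xk:ℝ) + 1) ≤ N := by nlinarith [hd, hc.1, hxkR]
  have hxj0 : (0:ℝ) ≤ xj := by linarith
  have hC1 : (xj:ℝ) * (yk - xk) ≤ 1/4 := by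
    nlinarith [mul_le_mul_of_nonneg_left hA1 hxj0, hB, hNpos]
  have hC2 : -(1/4 : ℝ) ≤ (xj:ℝ) * (yk - xk) := by
    nlinarith [mul_le_mul_of_nonneg_left hA2 hxj0, hB, hNpos]
  have hfin : |((xi - xj * xk : ℤ) : ℝ)| < 1 := by
    push_cast
    rw [abs_lt]
    constructor <;> nlinarith [he.1, he.2, hC1, hC2]
  have h : |xi - xj * xk| < 1 := by exact_mod_cast hfin
  rw [abs_lt] at h
  omega
end

section
/- Let A_1, …, A_ℓ ∈ ℝ^{m×n}, b_1, …, b_ℓ ∈ ℝ^n, c_1, …, c_ℓ ∈ ℝ, and ε > 0. Let ω > 0 be such that every convex set K ⊆ ℝ^m with lattice width at least ω contains a point of ℤ^m. Let δ > 0 satisfy δ ≤ 1 and δ·‖A_i‖·‖y‖ ≤ ε for all i whenever y ranges over the solutions of D y ≤ e, where D, e define a fixed system of linear inequalities, and set U := {u ∈ ℤ^m \ {0} : 2·δ·‖u‖ < ω}. Suppose there exist x ∈ ℝ^m and y ∈ ℝ^n such that: every component of x is at least 1; D y ≤ e; x^⊤A_i y + b_i^⊤ y ≤ c_i − ε for all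 i = 1, …, ℓ; and width_u(P(y)) ≥ ω for every u ∈ U. Then there exists x* ∈ ℤ^m with x* ≥ 0 componentwise and (x*)^⊤A_i y + b_i^⊤ y ≤ c_i for all i = 1, …, ℓ; in particular the original mixed-integer bilinear system is satisfiable. -/
open scoped BigOperators

/-- The polyhedron `P(y) = { x ∈ ℝ^m : x ≥ 0, xᵀ Aᵢ y + bᵢᵀ y ≤ cᵢ (i = 1..ℓ) }`. -/
def Pset {l m n : ℕ} (A : Fin l → Matrix (Fin m) (Fin n) ℝ)
    (b : Fin l → EuclideanSpace ℝ (Fin n)) (c : Fin l → ℝ)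
    (y : EuclideanSpace ℝ (Fin n)) : Set (EuclideanSpace ℝ (Fin m)) :=
  {x | (∀ j, 0 ≤ x j) ∧
    ∀ i, (∑ j, ∑ k, x j * A i j k * y k) + (∑ k, b i k * y k) ≤ c i}

/-- The operator norm of a matrix with respect to Euclidean norms. -/
noncomputable def matOpNorm {m n : ℕ} (A : Matrix (Fin m) (Fin n) ℝ) : ℝ :=
  ‖LinearMap.toContinuousLinearMap (Matrix.toEuclideanLin A)‖

/-- The width of a set `K ⊆ ℝ^m` with respect to an integer direction `u`:
`width_u(K) = sup { uᵀ(x - y) : x, y ∈ K }`, valued in the extended reals. -/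
noncomputable def intWidth {m : ℕ} (u : Fin m → ℤ) (K : Set (EuclideanSpace ℝ (Fin m))) :
    EReal :=
  ⨆ x ∈ K, ⨆ y ∈ K, ((∑ i, (u i : ℝ) * (x i - y i) : ℝ) : EReal)

/-!
The relaxed solution `x` satisfies every bilinear constraint with slack `ε` and lies at distance
at least `1 ≥ δ` from the boundary of the orthant, so by Cauchy–Schwarz (`δ ‖Aᵢ‖ ‖y‖ ≤ ε`) the whole
ball of radius `δ` around `x` lies in the convex polyhedron `P(y)`. Hence `width_u(P(y)) ≥ 2δ‖u‖`,
which is at least `ω` whenever the hypothesis on `width_u` does not already apply. So `P(y)` has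
lattice width at least `ω`, and flatness yields an integer point of `P(y)`.
-/

open Metric

theorem sum_mul_mul_eq_inner_toEuclideanLin {ι κ : Type*} [Fintype ι] [Fintype κ]
    [DecidableEq κ] (A : Matrix ι κ ℝ) (w : EuclideanSpace ℝ ι) (y : EuclideanSpace ℝ κ) :
    ∑ j, ∑ k, w j * A j k * y k = inner ℝ w (Matrix.toEuclideanLin A y) := by
  simp only [Matrix.toLpLin_apply, PiLp.inner_apply, RCLike.inner_apply, conj_trivial,
    Matrix.mulVec, dotProduct, Finset.sum_mul]
  exact Finset.sum_congr rfl fun j _ => Finset.sum_congr rfl fun k _ => by ring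

theorem norm_toEuclideanLin_le {m n : ℕ} (A : Matrix (Fin m) (Fin n) ℝ)
    (y : EuclideanSpace ℝ (Fin n)) : ‖Matrix.toEuclideanLin A y‖ ≤ matOpNorm A * ‖y‖ :=
  (LinearMap.toContinuousLinearMap (Matrix.toEuclideanLin A)).le_opNorm y

section Polyhedron

variable {l m n : ℕ} (A : Fin l → Matrix (Fin m) (Fin n) ℝ)
  (b : Fin l → EuclideanSpace ℝ (Fin n)) (c : Fin l → ℝ) (y : EuclideanSpace ℝ (Fin n))

theorem Pset_eq_inter_halfSpaces :
    Pset A b c y = (⋂ j, {x | 0 ≤ x j}) ∩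
      ⋂ i, {x | inner ℝ x (Matrix.toEuclideanLin (A i) y) ≤ c i - ∑ k, b i k * y k} := by
  ext x
  simp [Pset, sum_mul_mul_eq_inner_toEuclideanLin, le_sub_iff_add_le]

theorem convex_Pset : Convex ℝ (Pset A b c y) := by
  rw [Pset_eq_inter_halfSpaces]
  refine (convex_iInter fun j => convex_halfSpace_ge ?_ 0).inter
    (convex_iInter fun i => convex_halfSpace_le ?_ _)
  · exact (EuclideanSpace.proj j : EuclideanSpace ℝ (Fin m) →L[ℝ] ℝ).isLinear
  · exact ((innerₗ _).flip (Matrix.toEuclideanLin (A i) y)).isLinear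

theorem closedBall_subset_Pset {x : EuclideanSpace ℝ (Fin m)} {r ε : ℝ} (hrx : ∀ j, r ≤ x j)
    (hAy : ∀ i, r * matOpNorm (A i) * ‖y‖ ≤ ε)
    (hslack : ∀ i, (∑ j, ∑ k, x j * A i j k * y k) + (∑ k, b i k * y k) ≤ c i - ε) :
    closedBall x r ⊆ Pset A b c y := by
  intro z hz
  rw [mem_closedBall, dist_eq_norm] at hz
  refine ⟨fun j => ?_, fun i => ?_⟩
  · have hzj : |z j - x j| ≤ r := (PiLp.norm_apply_le (z - x) j).trans hz
    linarith [neg_abs_le (z j - x j), hrx j]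
  · set v := Matrix.toEuclideanLin (A i) y
    have hzx : inner ℝ (z - x) v ≤ r * matOpNorm (A i) * ‖y‖ := calc
      inner ℝ (z - x) v ≤ ‖z - x‖ * ‖v‖ := real_inner_le_norm _ _
      _ ≤ r * (matOpNorm (A i) * ‖y‖) :=
        mul_le_mul hz (norm_toEuclideanLin_le _ _) (norm_nonneg _) ((norm_nonneg _).trans hz)
      _ = r * matOpNorm (A i) * ‖y‖ := (mul_assoc _ _ _).symm
    have hsplit : inner ℝ z v = inner ℝ x v + inner ℝ (z - x) v := by
      rw [← inner_add_left, add_sub_cancel]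
    have := hslack i
    rw [sum_mul_mul_eq_inner_toEuclideanLin] at this ⊢
    linarith [hAy i]

end Polyhedron

section Width

variable {m : ℕ} {u : Fin m → ℤ} {K : Set (EuclideanSpace ℝ (Fin m))}

theorem le_intWidth {a b : EuclideanSpace ℝ (Fin m)} (ha : a ∈ K) (hb : b ∈ K) :
    ((∑ i, (u i : ℝ) * (a i - b i) : ℝ) : EReal) ≤ intWidth u K :=
  le_iSup₂_of_le a ha (le_iSup₂_of_le b hb le_rfl)

theorem le_intWidth_of_closedBall_subset {x : EuclideanSpace ℝ (Fin m)} {r : ℝ} (hr : 0 ≤ r)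
    (hK : closedBall x r ⊆ K) :
    ((2 * r * √(∑ j, (u j : ℝ) ^ 2) : ℝ) : EReal) ≤ intWidth u K := by
  set v : EuclideanSpace ℝ (Fin m) := WithLp.toLp 2 (fun j => (u j : ℝ))
  have hv : ‖v‖ = √(∑ j, (u j : ℝ) ^ 2) := by simp [EuclideanSpace.norm_eq, v]
  -- `x ± w` are the two points of the ball farthest apart in direction `u`
  set w := (r / ‖v‖) • v
  have hw : ‖w‖ ≤ r := by
    rw [norm_smul, norm_div, norm_norm, Real.norm_of_nonneg hr]
    rcases eq_or_ne ‖v‖ 0 with h | h <;> simp [h, hr]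
  have hsum : ∑ i, (u i : ℝ) * ((x + w) i - (x - w) i) = 2 * r * ‖v‖ := by
    have hv2 : ∑ i, (u i : ℝ) ^ 2 = ‖v‖ ^ 2 := by rw [hv, Real.sq_sqrt (by positivity)]
    calc ∑ i, (u i : ℝ) * ((x + w) i - (x - w) i) = 2 * (r / ‖v‖) * ∑ i, (u i : ℝ) ^ 2 := by
          simp only [Finset.mul_sum]
          refine Finset.sum_congr rfl fun i _ => ?_
          simp only [PiLp.add_apply, PiLp.sub_apply, PiLp.smul_apply, smul_eq_mul,
            add_sub_sub_cancel, w, v]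
          ring
      _ = 2 * r * ‖v‖ := by
          rw [hv2]
          rcases eq_or_ne ‖v‖ 0 with h | h
          · simp [h]
          · field_simp
  rw [← hv, ← hsum]
  exact le_intWidth (hK (by simpa using hw)) (hK (by simpa using hw))

end Width

theorem stmt5_general {l m n p : ℕ} (A : Fin l → Matrix (Fin m) (Fin n) ℝ)
    (b : Fin l → EuclideanSpace ℝ (Fin n)) (c : Fin l → ℝ)
    (D : Matrix (Fin p) (Fin n) ℝ) (e : Fin p → ℝ)
    (ε : ℝ) (ω : ℝ)
    (hflat : ∀ K : Set (EuclideanSpace ℝ (Fin m)), Convex ℝ K →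
      (∀ u : Fin m → ℤ, u ≠ 0 → (ω : EReal) ≤ intWidth u K) →
      ∃ z : Fin m → ℤ, (show EuclideanSpace ℝ (Fin m) from WithLp.toLp 2 (fun j => (z j : ℝ))) ∈ K)
    (δ : ℝ) (hδ0 : 0 < δ) (hδ1 : δ ≤ 1)
    (hδA : ∀ y : EuclideanSpace ℝ (Fin n), (∀ k, ∑ j, D k j * y j ≤ e k) →
      ∀ i, δ * matOpNorm (A i) * ‖y‖ ≤ ε)
    (x : EuclideanSpace ℝ (Fin m)) (y : EuclideanSpace ℝ (Fin n))
    (hx1 : ∀ j, 1 ≤ x j)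
    (hDy : ∀ k, ∑ j, D k j * y j ≤ e k)
    (hslack : ∀ i, (∑ j, ∑ k, x j * A i j k * y k) + (∑ k, b i k * y k) ≤ c i - ε)
    (hwidth : ∀ u : Fin m → ℤ, u ≠ 0 →
      2 * δ * Real.sqrt (∑ j, ((u j : ℝ)) ^ 2) < ω →
      (ω : EReal) ≤ intWidth u (Pset A b c y)) :
    ∃ xstar : Fin m → ℤ, (∀ j, 0 ≤ xstar j) ∧
      ∀ i, (∑ j, ∑ k, (xstar j : ℝ) * A i j k * y k) + (∑ k, b i k * y k) ≤ c i := by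
  have hball : closedBall x δ ⊆ Pset A b c y :=
    closedBall_subset_Pset A b c y (fun j => hδ1.trans (hx1 j)) (hδA y hDy) hslack
  have hwide : ∀ u : Fin m → ℤ, u ≠ 0 → (ω : EReal) ≤ intWidth u (Pset A b c y) := by
    intro u hu
    rcases lt_or_ge (2 * δ * Real.sqrt (∑ j, ((u j : ℝ)) ^ 2)) ω with hnarrow | hwide
    · exact hwidth u hu hnarrow
    · exact (EReal.coe_le_coe_iff.2 hwide).trans (le_intWidth_of_closedBall_subset hδ0.le hball)
  obtain ⟨z, hz_nonneg, hz⟩ := hflat _ (convex_Pset A b c y) hwide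
  exact ⟨z, fun j => Int.cast_nonneg_iff.mp (hz_nonneg j), hz⟩

/-- Soundness of the relaxation step: if the relaxed system is satisfiable (there are
real `x ≥ 1` and `y` with `D y ≤ e`, all bilinear constraints satisfied with slack `ε`,
and `width_u(P(y)) ≥ ω` for every nonzero integer `u` with `2 δ ‖u‖ < ω`), where `ω` has
the flatness property and `δ ≤ 1` satisfies `δ ‖Aᵢ‖ ‖y‖ ≤ ε` for all feasible `y`, then
the original mixed-integer bilinear system has an integer solution: a nonnegative
`x* ∈ ℤ^m` with `(x*)ᵀ Aᵢ y + bᵢᵀ y ≤ cᵢ` for all `i`. -/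
theorem stmt5 {l m n p : ℕ} (A : Fin l → Matrix (Fin m) (Fin n) ℝ)
    (b : Fin l → EuclideanSpace ℝ (Fin n)) (c : Fin l → ℝ)
    (D : Matrix (Fin p) (Fin n) ℝ) (e : Fin p → ℝ)
    (ε : ℝ) (hε : 0 < ε) (ω : ℝ) (hω : 0 < ω)
    (hflat : ∀ K : Set (EuclideanSpace ℝ (Fin m)), Convex ℝ K →
      (∀ u : Fin m → ℤ, u ≠ 0 → (ω : EReal) ≤ intWidth u K) →
      ∃ z : Fin m → ℤ, (show EuclideanSpace ℝ (Fin m) from WithLp.toLp 2 (fun j => (z j : ℝ))) ∈ K)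
    (δ : ℝ) (hδ0 : 0 < δ) (hδ1 : δ ≤ 1)
    (hδA : ∀ y : EuclideanSpace ℝ (Fin n), (∀ k, ∑ j, D k j * y j ≤ e k) →
      ∀ i, δ * matOpNorm (A i) * ‖y‖ ≤ ε)
    (x : EuclideanSpace ℝ (Fin m)) (y : EuclideanSpace ℝ (Fin n))
    (hx1 : ∀ j, 1 ≤ x j)
    (hDy : ∀ k, ∑ j, D k j * y j ≤ e k)
    (hslack : ∀ i, (∑ j, ∑ k, x j * A i j k * y k) + (∑ k, b i k * y k) ≤ c i - ε)
    (hwidth : ∀ u : Fin m → ℤ, u ≠ 0 →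
      2 * δ * Real.sqrt (∑ j, ((u j : ℝ)) ^ 2) < ω →
      (ω : EReal) ≤ intWidth u (Pset A b c y)) :
    ∃ xstar : Fin m → ℤ, (∀ j, 0 ≤ xstar j) ∧
      ∀ i, (∑ j, ∑ k, (xstar j : ℝ) * A i j k * y k) + (∑ k, b i k * y k) ≤ c i :=
  stmt5_general A b c D e ε ω hflat δ hδ0 hδ1 hδA x y hx1 hDy hslack hwidth
end

section
/- Let a_1, …, a_ℓ ∈ ℝ^m and d_1, …, d_ℓ ∈ ℝ, and let P := {x ∈ ℝ^m : x ≥ 0 componentwise and a_i^⊤ x ≤ d_i for i = 1, …, ℓ}. Suppose the origin does not belong to P and let x* ∈ P. Then there exist t ∈ (0,1] and an index i₀ ∈ {1, …, ℓ} such that t·x* ∈ P, a_{i₀}^⊤(t·x*) = d_{i₀}, and d_{i₀} < 0. -/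
open scoped BigOperators

/-- Geometric step in the branch-and-bound proposition: if the origin does not belong to
the polyhedron `P = { x : x ≥ 0, aᵢᵀ x ≤ dᵢ }` while `x* ∈ P`, then the segment from the
origin to `x*` meets the boundary of `P` at a point `t • x*` (with `0 < t ≤ 1`) at which
some defining inequality `a_{i₀}ᵀ x ≤ d_{i₀}` is tight, and moreover `d_{i₀} < 0`. -/
theorem stmt7 {l m : ℕ} (a : Fin l → Fin m → ℝ) (d : Fin l → ℝ)
    (P : Set (Fin m → ℝ))
    (hP : P = {x | (∀ j, 0 ≤ x j) ∧ ∀ i, ∑ j, a i j * x j ≤ d i})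
    (h0 : (0 : Fin m → ℝ) ∉ P) (xstar : Fin m → ℝ) (hx : xstar ∈ P) :
    ∃ t : ℝ, t ∈ Set.Ioc (0 : ℝ) 1 ∧ ∃ i₀ : Fin l,
      t • xstar ∈ P ∧ (∑ j, a i₀ j * (t * xstar j)) = d i₀ ∧ d i₀ < 0 := by
  subst hP
  obtain ⟨hx1, hx2⟩ := hx
  set c : Fin l → ℝ := fun i => ∑ j, a i j * xstar j with hc
  -- existence of a violated constraint at 0
  have hbad : ∃ i, d i < 0 := by
    by_contra h
    push_neg at h
    exact h0 ⟨fun j => le_refl 0, fun i => by simpa using h i⟩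
  obtain ⟨ib, hib⟩ := hbad
  set s : Finset (Fin l) := Finset.univ.filter (fun i => d i < 0) with hs
  have hsne : s.Nonempty := ⟨ib, by simp [hs, hib]⟩
  have hcneg : ∀ i ∈ s, c i < 0 := fun i hi => by
    have : d i < 0 := by simpa [hs] using hi
    exact lt_of_le_of_lt (hx2 i) this
  set T : Fin l → ℝ := fun i => d i / c i with hT
  obtain ⟨i₀, hi₀s, hi₀max⟩ := s.exists_max_image T hsne
  have hdi₀ : d i₀ < 0 := by simpa [hs] using hi₀s
  have hci₀ : c i₀ < 0 := hcneg i₀ hi₀s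
  set t : ℝ := T i₀ with ht
  have htpos : 0 < t := div_pos_of_neg_of_neg hdi₀ hci₀
  have hTle1 : ∀ i ∈ s, T i ≤ 1 := by
    intro i hi
    have hci := hcneg i hi
    rw [hT]
    rw [div_le_one_of_neg hci]
    simpa using hx2 i
  have htle1 : t ≤ 1 := hTle1 i₀ hi₀s
  have hsum : ∀ i, ∑ j, a i j * (t * xstar j) = t * c i := by
    intro i
    rw [hc, Finset.mul_sum]
    exact Finset.sum_congr rfl (fun j _ => by ring)
  refine ⟨t, ⟨htpos, htle1⟩, i₀, ⟨fun j => mul_nonneg htpos.le (hx1 j), ?_⟩,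
    by rw [hsum, ht, hT]; exact div_mul_cancel₀ _ hci₀.ne, hdi₀⟩
  intro i
  have : ∑ j, a i j * (t • xstar) j = t * c i := by
    simpa [Pi.smul_apply, smul_eq_mul] using hsum i
  rw [this]
  by_cases hi : i ∈ s
  · have hci := hcneg i hi
    have hTi : T i ≤ t := hi₀max i hi
    calc t * c i ≤ T i * c i := mul_le_mul_of_nonpos_right hTi hci.le
    _ = d i := div_mul_cancel₀ _ hci.ne
  · have hdi : 0 ≤ d i := by
      by_contra h
      exact hi (by simp [hs]; linarith)
    by_cases hciv : c i ≤ 0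
    · exact le_trans (mul_nonpos_of_nonneg_of_nonpos htpos.le hciv) hdi
    · push_neg at hciv
      calc t * c i ≤ 1 * c i := mul_le_mul_of_nonneg_right htle1 hciv.le
      _ = c i := one_mul _
      _ ≤ d i := hx2 i
end

section
/- Let n ≥ 1, let x_1, …, x_n be nonnegative integers and y_0, y_1, …, y_n nonnegative real numbers such that x_1 = 2, y_0 = 1, x_i·y_i ≤ 1 for i = 1, …, n, and x_{i+1}·y_i ≥ x_i·y_0 for i = 1, …, n − 1. Then x_n ≥ 2^(2^(n−1)). -/
open scoped BigOperators

/-- Lower-bound example: the constraints `x₁ = 2`, `y₀ = 1`, `xᵢ yᵢ ≤ 1` and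
`x_{i+1} yᵢ ≥ xᵢ y₀` over nonnegative integers `xᵢ` and nonnegative reals `yᵢ`
force `xₙ ≥ 2^(2^(n-1))`. -/
theorem stmt9 (n : ℕ) (hn : 1 ≤ n) (x : ℕ → ℤ) (y : ℕ → ℝ)
    (hx0 : ∀ i, 1 ≤ i → i ≤ n → 0 ≤ x i)
    (hy0 : ∀ i, i ≤ n → 0 ≤ y i)
    (hx1 : x 1 = 2) (hy1 : y 0 = 1)
    (hup : ∀ i, 1 ≤ i → i ≤ n → (x i : ℝ) * y i ≤ 1)
    (hlow : ∀ i, 1 ≤ i → i ≤ n - 1 → (x i : ℝ) * y 0 ≤ (x (i + 1) : ℝ) * y i) :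
    (2 : ℤ) ^ (2 ^ (n - 1)) ≤ x n := by
  have key : ∀ i, 1 ≤ i → i ≤ n → (2 : ℤ) ^ (2 ^ (i - 1)) ≤ x i := by
    intro i
    induction i with
    | zero => omega
    | succ i ih =>
      intro _ hin
      rcases Nat.eq_or_lt_of_le (Nat.one_le_iff_ne_zero.mpr (Nat.succ_ne_zero i)) with h1 | h1
      · have hi0 : i = 0 := by omega
        subst hi0
        simp [hx1]
      · -- i ≥ 1
        have hi1 : 1 ≤ i := by omega
        have hin' : i ≤ n := by omega
        have hxi := ih hi1 hin'
        have hxi2 : (2 : ℤ) ≤ x i := le_trans (by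
          calc (2:ℤ) = 2 ^ 1 := (pow_one 2).symm
          _ ≤ 2 ^ (2 ^ (i-1)) := pow_le_pow_right₀ (by norm_num) (Nat.one_le_two_pow)) hxi
        have hxiR : (2 : ℝ) ≤ (x i : ℝ) := by exact_mod_cast hxi2
        have hxipos : (0 : ℝ) < (x i : ℝ) := by linarith
        have hyi : 0 ≤ y i := hy0 i hin'
        have hyi' : y i ≤ 1 / (x i : ℝ) := by
          rw [le_div_iff₀ hxipos]
          have := hup i hi1 hin'
          linarith [this]
        have hlow' := hlow i hi1 (by omega)
        rw [hy1, mul_one] at hlow'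
        have hx1pos : (0 : ℝ) ≤ (x (i+1) : ℝ) := by
          exact_mod_cast hx0 (i+1) (by omega) hin
        have h2 : (x i : ℝ) ≤ (x (i+1) : ℝ) * (1 / (x i : ℝ)) :=
          le_trans hlow' (by
            exact mul_le_mul_of_nonneg_left hyi' hx1pos)
        have h3 : (x i : ℝ) * (x i : ℝ) ≤ (x (i+1) : ℝ) := by
          rw [mul_one_div] at h2
          calc (x i : ℝ) * (x i : ℝ) ≤ ((x (i+1) : ℝ) / (x i : ℝ)) * (x i : ℝ) :=
            mul_le_mul_of_nonneg_right h2 (le_of_lt hxipos)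
          _ = (x (i+1) : ℝ) := div_mul_cancel₀ _ (ne_of_gt hxipos)
        have h3' : x i * x i ≤ x (i+1) := by exact_mod_cast h3
        have hpow : (2 : ℤ) ^ (2 ^ i) = 2 ^ (2 ^ (i-1)) * 2 ^ (2 ^ (i-1)) := by
          rw [← pow_add]
          congr 1
          rw [← two_mul, ← pow_succ']
          congr 1
          omega
        calc (2 : ℤ) ^ (2 ^ (i + 1 - 1)) = 2 ^ (2 ^ (i-1)) * 2 ^ (2 ^ (i-1)) := by
              simpa using hpow
          _ ≤ x i * x i := mul_le_mul hxi hxi (by positivity) (le_trans (by positivity) hxi)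
          _ ≤ x (i+1) := h3'
  exact key n hn le_rfl
end

section
/- Let n ≥ 1 and let 0 < ε < 1/2. Then there exist nonnegative integers x_1, …, x_n and nonnegative real numbers y_0, y_1, …, y_n such that x_1 = 2, y_0 = 1, x_i·y_i ≤ 1 − ε for i = 1, …, n, and x_{i+1}·y_i ≥ x_i·y_0 + ε for i = 1, …, n − 1. -/
/-!
Take `y i = (1 - ε) / x i`, so that `x i * y i = 1 - ε` exactly. The remaining constraint
`x i + ε ≤ x (i + 1) * (1 - ε) / x i` holds as soon as `x (i + 1) = 3 * x i ^ 2`, because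
`1 - ε > 1 / 2`; starting from `x 1 = 2` this recursion gives a doubly exponential witness.
-/

def tripleSqSeq : ℕ → ℤ
  | 0 => 2
  | k + 1 => 3 * tripleSqSeq k ^ 2

lemma two_le_tripleSqSeq (k : ℕ) : 2 ≤ tripleSqSeq k := by
  induction k with
  | zero => rfl
  | succ k ih => rw [tripleSqSeq]; nlinarith

lemma add_le_three_mul_sq_mul_div {a ε : ℝ} (ha : 1 ≤ a) (hε : ε < 1 / 2) :
    a + ε ≤ 3 * a ^ 2 * ((1 - ε) / a) := by
  have hsimp : 3 * a ^ 2 * ((1 - ε) / a) = 3 * a * (1 - ε) := by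
    field_simp
  rw [hsimp]
  nlinarith

theorem stmt10_general (n : ℕ) (ε : ℝ) (hε1 : ε < 1 / 2) :
    ∃ (x : ℕ → ℤ) (y : ℕ → ℝ),
      (∀ i, 1 ≤ i → i ≤ n → 0 ≤ x i) ∧
      (∀ i, i ≤ n → 0 ≤ y i) ∧
      x 1 = 2 ∧ y 0 = 1 ∧
      (∀ i, 1 ≤ i → i ≤ n → (x i : ℝ) * y i ≤ 1 - ε) ∧
      (∀ i, 1 ≤ i → i ≤ n - 1 → (x i : ℝ) * y 0 + ε ≤ (x (i + 1) : ℝ) * y i) := by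
  set x : ℕ → ℤ := fun i => tripleSqSeq (i - 1)
  have hx (i : ℕ) : (2 : ℝ) ≤ x i := by exact_mod_cast two_le_tripleSqSeq _
  have hxsucc (i : ℕ) (hi : 1 ≤ i) : x (i + 1) = 3 * x i ^ 2 := by
    obtain ⟨k, rfl⟩ := Nat.exists_eq_add_of_le' hi
    rfl
  refine ⟨x, fun i => if i = 0 then 1 else (1 - ε) / x i,
    fun i _ _ => by linarith [two_le_tripleSqSeq (i - 1)], fun i _ => ?_, rfl, rfl,
    fun i hi _ => ?_, fun i hi _ => ?_⟩
  · dsimp only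
    split_ifs
    · exact zero_le_one
    · exact div_nonneg (by linarith) (by linarith [hx i])
  · dsimp only
    rw [if_neg (by omega), mul_div_cancel₀ _ (by linarith [hx i])]
  · dsimp only
    rw [if_pos rfl, if_neg (by omega), mul_one, hxsucc i hi]
    push_cast
    exact add_le_three_mul_sq_mul_div (by linarith [hx i]) hε1

/-- The doubly-exponential example system admits, for every `0 < ε < 1/2`, an
assignment satisfying all its bilinear constraints with slack `ε`. -/
theorem stmt10 (n : ℕ) (hn : 1 ≤ n) (ε : ℝ) (hε0 : 0 < ε) (hε1 : ε < 1 / 2) :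
    ∃ (x : ℕ → ℤ) (y : ℕ → ℝ),
      (∀ i, 1 ≤ i → i ≤ n → 0 ≤ x i) ∧
      (∀ i, i ≤ n → 0 ≤ y i) ∧
      x 1 = 2 ∧ y 0 = 1 ∧
      (∀ i, 1 ≤ i → i ≤ n → (x i : ℝ) * y i ≤ 1 - ε) ∧
      (∀ i, 1 ≤ i → i ≤ n - 1 → (x i : ℝ) * y 0 + ε ≤ (x (i + 1) : ℝ) * y i) :=
  stmt10_general n ε hε1
end
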